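/- Let λ ∈ Emb(K), let δ, ε ∈ Gal(K/k), and let δ̄ be a k-algebra automorphism of K̄ extending δ such that δ̄⁻¹ ∘ λ ∘ ε = λ (as maps K → K̄). Then δ̄(K(λ)) = K(λ), so that δ̄ restricts to a k-algebra automorphism of the field K(λ); moreover, if δ̄' is any other k-algebra automorphism of K̄ extending δ with (δ̄')⁻¹ ∘ λ ∘ ε = λ, then δ̄'|_{K(λ)} = δ̄|_{K(λ)}. -/

import Mathlib

open TensorProduct

noncomputable section

variable (k K : Type*) [Field k] [Field K] [Algebra k K]

/-- The compositum `K(λ)` of `K` and `λ(K)` inside the algebraic closure of `K`. -/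
def Klam (lam : K →ₐ[k] AlgebraicClosure K) : IntermediateField K (AlgebraicClosure K) :=
  IntermediateField.adjoin K (Set.range lam)

variable [PerfectField k] [FiniteDimensional k K]

/-!
As a field, `K(λ)` is generated by `K ∪ λ(K)`. The hypotheses say that `δ̄` maps `K` onto `K`
(acting as `δ`) and `λ(K)` onto `λ(K)` (acting as `λ ∘ ε ∘ λ⁻¹`), so `δ̄` stabilises the
generating set, hence the field it generates; and any two ring homomorphisms agreeing on the
generating set agree on `K(λ)`.
-/

theorem Function.Semiconj.image_range {α β : Type*} {f : α → β} {fa : α → α} {fb : β → β}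
    (h : Function.Semiconj f fa fb) (ha : Function.Surjective fa) :
    fb '' Set.range f = Set.range f :=
  (h.surjOn_range ha).image_eq_of_mapsTo h.mapsTo_range

namespace IntermediateField

variable {F E : Type*} [Field F] [Field E] [Algebra F E]

theorem image_adjoin_eq_of_image_eq (σ : E →+* E) {S : Set E}
    (hF : σ '' Set.range (algebraMap F E) = Set.range (algebraMap F E)) (hS : σ '' S = S) :
    σ '' (adjoin F S : Set E) = adjoin F S := by
  rw [← coe_toSubfield, adjoin_toSubfield, ← Subfield.coe_map, RingHom.map_field_closure,
    Set.image_union, hF, hS]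

theorem eqOn_adjoin {E' : Type*} [Field E'] {σ τ : E →+* E'} {S : Set E}
    (hF : Set.EqOn σ τ (Set.range (algebraMap F E))) (hS : Set.EqOn σ τ S) :
    Set.EqOn σ τ (adjoin F S) :=
  RingHom.eqOn_field_closure (hF.union hS)

end IntermediateField

theorem extension_preserves_Klam
    (lam : K →ₐ[k] AlgebraicClosure K) (δ ε : K ≃ₐ[k] K)
    (δbar : AlgebraicClosure K ≃ₐ[k] AlgebraicClosure K)
    (hext : ∀ x : K, δbar (algebraMap K (AlgebraicClosure K) x) =
      algebraMap K (AlgebraicClosure K) (δ x))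
    (hfix : ∀ x : K, δbar.symm (lam (ε x)) = lam x) :
    (⇑δbar '' (Klam k K lam : Set (AlgebraicClosure K)) =
      (Klam k K lam : Set (AlgebraicClosure K))) ∧
    ∀ δbar' : AlgebraicClosure K ≃ₐ[k] AlgebraicClosure K,
      (∀ x : K, δbar' (algebraMap K (AlgebraicClosure K) x) =
        algebraMap K (AlgebraicClosure K) (δ x)) →
      (∀ x : K, δbar'.symm (lam (ε x)) = lam x) →
      ∀ y ∈ Klam k K lam, δbar' y = δbar y := by
  have hlam : ∀ x, δbar (lam x) = lam (ε x) := fun x => (δbar.symm_apply_eq.mp (hfix x)).symm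
  refine ⟨IntermediateField.image_adjoin_eq_of_image_eq δbar.toRingEquiv.toRingHom
    (Function.Semiconj.image_range (fun x => (hext x).symm) δ.surjective)
    (Function.Semiconj.image_range (fun x => (hlam x).symm) ε.surjective), ?_⟩
  intro δbar' hext' hfix' y hy
  have hlam' : ∀ x, δbar' (lam x) = lam (ε x) := fun x => (δbar'.symm_apply_eq.mp (hfix' x)).symm
  refine IntermediateField.eqOn_adjoin (σ := δbar'.toRingEquiv.toRingHom)
    (τ := δbar.toRingEquiv.toRingHom) ?_ ?_ hy
  · rintro _ ⟨x, rfl⟩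
    exact (hext' x).trans (hext x).symm
  · rintro _ ⟨x, rfl⟩
    exact (hlam' x).trans (hlam x).symm
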